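/- Let X be a pre-Riesz space, let m ∈ ℕ, and let x₁, …, x_m ∈ X \ {0} be pairwise disjoint (x_i ⊥ x_j whenever i ≠ j). Then the tuple (x₁, …, x_m) is linearly independent over ℝ. -/

import Mathlib

/-! The disjoint complement of any set in a pre-Riesz space is a linear subspace. Hence if some
`x i` lay in the span of the others, it would be disjoint from itself, which forces `x i = 0`.
Closedness under addition and under scalars `t ∈ [0, 1]` is checked directly against the
pre-Riesz condition, applied to the finite sets `{±x ± y ± z}` and `{±(x + y)}`; a scalar `t > 1`
is reduced to `t⁻¹` by rescaling both sides. -/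

open Pointwise

variable {X : Type*} [AddCommGroup X] [PartialOrder X] [IsOrderedAddMonoid X] [Module ℝ X]
  [PosSMulStrictMono ℝ X] [PosSMulReflectLT ℝ X]

/-- Two elements of an ordered vector space are disjoint if the sets `{x+y, -x-y}` and
`{x-y, y-x}` have the same set of upper bounds. -/
def UDisjoint (x y : X) : Prop :=
  upperBounds ({x + y, -x - y} : Set X) = upperBounds ({x - y, y - x} : Set X)

/-- The disjoint complement `S^⊥` of a set `S`. -/
def dComp (S : Set X) : Set X := {x : X | ∀ s ∈ S, UDisjoint x s}

/-- A band: a set equal to its double disjoint complement. -/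
def IsBand (B : Set X) : Prop := B = dComp (dComp B)

/-- A projection band: a band `B` with `B ∩ B^⊥ = {0}` and `B + B^⊥ = X`. -/
def IsProjBand (B : Set X) : Prop :=
  IsBand B ∧ B ∩ dComp B = {0} ∧ ∀ x : X, ∃ b ∈ B, ∃ c ∈ dComp B, x = b + c

/-- A positive linear operator. -/
def IsPosMap (T : X →ₗ[ℝ] X) : Prop := ∀ x : X, 0 ≤ x → 0 ≤ T x

/-- A band projection: a linear projection whose range is a projection band and whose
kernel is the disjoint complement of the range. -/
def IsBandProj (P : X →ₗ[ℝ] X) : Prop :=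
  P ∘ₗ P = P ∧ IsProjBand (Set.range ⇑P) ∧ (LinearMap.ker P : Set X) = dComp (Set.range ⇑P)

/-- A pre-Riesz space: for every nonempty finite `A ⊆ X` and every `x`, if the upper bounds
of `x + A` are contained in the upper bounds of `A`, then `x ≥ 0`. -/
def IsPreRiesz (X : Type*) [AddCommGroup X] [PartialOrder X] [IsOrderedAddMonoid X] [Module ℝ X]
    [PosSMulStrictMono ℝ X] [PosSMulReflectLT ℝ X] : Prop :=
  ∀ (A : Set X) (x : X), A.Finite → A.Nonempty →
    upperBounds ((x + ·) '' A) ⊆ upperBounds A → 0 ≤ x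

section OrderedGroup

variable {E : Type*} [AddCommGroup E] [PartialOrder E]

theorem uDisjoint_iff {x y : E} :
    UDisjoint x y ↔ ∀ u, (x + y ≤ u ∧ -(x + y) ≤ u ↔ x - y ≤ u ∧ -(x - y) ≤ u) := by
  simp only [UDisjoint, Set.ext_iff, upperBounds_insert, upperBounds_singleton, Set.mem_inter_iff,
    Set.mem_Ici, neg_sub, neg_add']

theorem uDisjoint_zero_right (x : E) : UDisjoint x 0 := by
  simp [UDisjoint]

theorem uDisjoint_self_iff [IsOrderedAddMonoid E] [Module ℝ E] {x : E} :
    UDisjoint x x ↔ x = 0 := by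
  refine ⟨fun h => ?_, fun h => h ▸ uDisjoint_zero_right 0⟩
  obtain ⟨hle, hge⟩ : x + x ≤ 0 ∧ -(x + x) ≤ 0 := ((uDisjoint_iff.1 h) 0).2 (by simp)
  have hxx : (2 : ℝ) • x = 0 := (two_smul ℝ x).trans (le_antisymm hle (neg_nonpos.1 hge))
  exact (smul_eq_zero.1 hxx).resolve_left two_ne_zero

namespace UDisjoint

variable {x y : E}

theorem symm (h : UDisjoint x y) : UDisjoint y x := by
  rw [uDisjoint_iff] at h ⊢
  intro u
  rw [add_comm, ← neg_sub x y, neg_neg, and_comm (a := -(x - y) ≤ u)]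
  exact h u

theorem neg_right (h : UDisjoint x y) : UDisjoint x (-y) := by
  rw [uDisjoint_iff] at h ⊢
  intro u
  rw [← sub_eq_add_neg, sub_neg_eq_add]
  exact (h u).symm

theorem neg_left (h : UDisjoint x y) : UDisjoint (-x) y :=
  h.symm.neg_right.symm

theorem smul [Module ℝ E] [PosSMulMono ℝ E] [PosSMulReflectLE ℝ E] {s : ℝ} (hs : 0 < s)
    (h : UDisjoint x y) : UDisjoint (s • x) (s • y) := by
  have key := congrArg (s • ·) h
  simp only [← upperBounds_smul_of_pos hs, Set.smul_set_insert, Set.smul_set_singleton, smul_add,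
    smul_sub, smul_neg] at key
  exact key

theorem add_sub_le [IsOrderedAddMonoid E] {a u : E} (h : UDisjoint x y) (h₁ : a + (x + y) ≤ u)
    (h₂ : a - (x + y) ≤ u) : a + (x - y) ≤ u := by
  rw [← le_sub_iff_add_le'] at h₁ ⊢
  rw [sub_eq_add_neg, ← le_sub_iff_add_le'] at h₂
  exact ((uDisjoint_iff.1 h (u - a)).1 ⟨h₁, h₂⟩).1

end UDisjoint

/- The four inequalities making up `x ⊥ y` are all instances of one of them, after changing the
signs of `x` and `y`. -/
theorem uDisjoint_of_sub_le {P : E → E → Prop} (hneg : ∀ a b, P a b → P (-a) b ∧ P a (-b))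
    (hle : ∀ a b, P a b → ∀ u : E, a + b ≤ u → -(a + b) ≤ u → a - b ≤ u) {x y : E}
    (hxy : P x y) : UDisjoint x y := by
  have hnn : P (-x) (-y) := (hneg _ _ (hneg _ _ hxy).1).2
  rw [uDisjoint_iff]
  refine fun u => ⟨fun ⟨h₁, h₂⟩ => ⟨hle x y hxy u h₁ h₂, ?_⟩, fun ⟨h₁, h₂⟩ => ⟨?_, ?_⟩⟩
  · convert hle (-x) (-y) hnn u (by convert h₂ using 1; abel) (by convert h₁ using 1; abel)
      using 1; abel
  · convert hle x (-y) (hneg _ _ hxy).2 u (by convert h₁ using 1; abel)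
      (by convert h₂ using 1; abel) using 1; abel
  · convert hle (-x) y (hneg _ _ hxy).1 u (by convert h₂ using 1; abel)
      (by convert h₁ using 1; abel) using 1; abel

end OrderedGroup

namespace IsPreRiesz

theorem nonneg_of_forall_le (hX : IsPreRiesz X) {A : Set X} (hA : A.Finite) (hne : A.Nonempty)
    {g : X} (h : ∀ u, (∀ a ∈ A, g + a ≤ u) → ∀ a ∈ A, a ≤ u) : 0 ≤ g :=
  hX A g hA hne fun u hu => h u fun a ha => hu ⟨a, ha, rfl⟩

theorem sub_smul_le_of_uDisjoint (hX : IsPreRiesz X) {x y u : X} {t : ℝ} (h : UDisjoint x y)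
    (ht₀ : 0 ≤ t) (ht₁ : t ≤ 1) (h₁ : x + t • y ≤ u) (h₂ : -(x + t • y) ≤ u) :
    x - t • y ≤ u := by
  rw [← sub_nonneg]
  refine hX.nonneg_of_forall_le (A := {x + y, -(x + y)}) (Set.toFinite _)
    (Set.insert_nonempty _ _) fun u' hu' => ?_
  simp only [Set.forall_mem_insert, Set.mem_singleton_iff, forall_eq] at hu' ⊢
  obtain ⟨hp, hm⟩ := hu'
  have hp' : u - (x - t • y) + (x - y) ≤ u' := h.add_sub_le hp (by rwa [← sub_eq_add_neg] at hm)
  constructor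
  · calc x + y = x + t • y + (1 - t) • y := by module
      _ ≤ u + (1 - t) • y := by gcongr
      _ = (1 - t) • (u - (x - t • y) + (x + y)) + t • (u - (x - t • y) + (x - y)) := by module
      _ ≤ (1 - t) • u' + t • u' := add_le_add (smul_le_smul_of_nonneg_left hp (sub_nonneg.2 ht₁))
          (smul_le_smul_of_nonneg_left hp' ht₀)
      _ = u' := by module
  · calc -(x + y) = -(x + t • y) - (1 - t) • y := by module
      _ ≤ u - (1 - t) • y := sub_le_sub_right h₂ _
      _ = u - (x - t • y) + (x - y) := by module
      _ ≤ u' := hp'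

theorem sub_sub_le_of_uDisjoint (hX : IsPreRiesz X) {x y z u : X} (hxy : UDisjoint x y)
    (hxz : UDisjoint x z) (h₁ : x + y + z ≤ u) (h₂ : -(x + y + z) ≤ u) : x - y - z ≤ u := by
  rw [← sub_nonneg]
  refine hX.nonneg_of_forall_le (A := {x + y + z, x + y - z, x - y + z, x - y - z,
    -x + y + z, -x + y - z, -x - y + z, -x - y - z}) (Set.toFinite _)
    (Set.insert_nonempty _ _) fun u' hu' => ?_
  simp only [Set.forall_mem_insert, Set.mem_singleton_iff, forall_eq] at hu' ⊢
  obtain ⟨-, h₂', h₃', h₄', -, -, -, h₈'⟩ := hu'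
  have hu : u ≤ u' := by simpa using h₄'
  have hx : u - (x + x) ≤ u' := by convert h₈' using 1; abel
  have hy : u + (y + y) ≤ u' := by convert h₂' using 1; abel
  have hz : u + (z + z) ≤ u' := by convert h₃' using 1; abel
  have T₁ : x + y + z ≤ u' := h₁.trans hu
  have T₅ : -x + y + z ≤ u' := ((sub_le_sub_right h₁ _).trans hx).trans_eq' (by abel)
  have T₆ : -x + y - z ≤ u' := ((add_le_add_left h₂ _).trans hy).trans_eq' (by abel)
  have T₇ : -x - y + z ≤ u' := ((add_le_add_left h₂ _).trans hz).trans_eq' (by abel)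
  have T₈ : -x - y - z ≤ u' := (h₂.trans hu).trans_eq' (by abel)
  have T₂ : x + y - z ≤ u' :=
    (hxz.add_sub_le (a := y) (T₁.trans_eq' (by abel)) (T₆.trans_eq' (by abel))).trans_eq' (by abel)
  have T₃ : x - y + z ≤ u' :=
    (hxy.add_sub_le (a := z) (T₁.trans_eq' (by abel)) (T₇.trans_eq' (by abel))).trans_eq' (by abel)
  have T₄ : x - y - z ≤ u' :=
    (hxy.add_sub_le (a := -z) (T₂.trans_eq' (by abel)) (T₈.trans_eq' (by abel))).trans_eq' (by abel)
  exact ⟨T₁, T₂, T₃, T₄, T₅, T₆, T₇, T₈⟩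

theorem uDisjoint_add_right (hX : IsPreRiesz X) {x y z : X} (hxy : UDisjoint x y)
    (hxz : UDisjoint x z) : UDisjoint x (y + z) :=
  uDisjoint_of_sub_le (P := fun a b => ∃ y z, b = y + z ∧ UDisjoint a y ∧ UDisjoint a z)
    (by
      rintro a _ ⟨y, z, rfl, hy, hz⟩
      exact ⟨⟨y, z, rfl, hy.neg_left, hz.neg_left⟩,
        ⟨-y, -z, neg_add y z, hy.neg_right, hz.neg_right⟩⟩)
    (by
      rintro a _ ⟨y, z, rfl, hy, hz⟩ u h₁ h₂
      rw [← add_assoc] at h₁ h₂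
      exact (hX.sub_sub_le_of_uDisjoint hy hz h₁ h₂).trans_eq' (sub_add_eq_sub_sub a y z).symm)
    ⟨y, z, rfl, hxy, hxz⟩

theorem uDisjoint_smul_right_of_mem_Icc (hX : IsPreRiesz X) {x y : X} {t : ℝ} (h : UDisjoint x y)
    (ht : t ∈ Set.Icc (0 : ℝ) 1) : UDisjoint x (t • y) :=
  uDisjoint_of_sub_le (P := fun a b => ∃ y, ∃ t ∈ Set.Icc (0 : ℝ) 1, b = t • y ∧ UDisjoint a y)
    (by
      rintro a _ ⟨y, t, ht, rfl, hy⟩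
      exact ⟨⟨y, t, ht, rfl, hy.neg_left⟩, ⟨-y, t, ht, (smul_neg t y).symm, hy.neg_right⟩⟩)
    (by
      rintro a _ ⟨y, t, ht, rfl, hy⟩ u
      exact hX.sub_smul_le_of_uDisjoint hy ht.1 ht.2)
    ⟨y, t, ht, rfl, h⟩

theorem uDisjoint_smul_right_of_pos (hX : IsPreRiesz X) {x y : X} {t : ℝ} (h : UDisjoint x y)
    (ht : 0 < t) : UDisjoint x (t • y) := by
  rcases le_total t 1 with ht₁ | ht₁
  · exact hX.uDisjoint_smul_right_of_mem_Icc h ⟨ht.le, ht₁⟩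
  · have h' := (hX.uDisjoint_smul_right_of_mem_Icc h.symm
      ⟨inv_nonneg.2 ht.le, inv_le_one_of_one_le₀ ht₁⟩).smul ht
    rw [smul_inv_smul₀ ht.ne'] at h'
    exact h'.symm

theorem uDisjoint_smul_right (hX : IsPreRiesz X) {x y : X} (h : UDisjoint x y) (t : ℝ) :
    UDisjoint x (t • y) := by
  rcases lt_trichotomy t 0 with ht | rfl | ht
  · simpa using hX.uDisjoint_smul_right_of_pos h.neg_right (neg_pos.2 ht)
  · simpa using uDisjoint_zero_right x
  · exact hX.uDisjoint_smul_right_of_pos h ht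

def dCompSubmodule (hX : IsPreRiesz X) (S : Set X) : Submodule ℝ X where
  carrier := dComp S
  add_mem' hy hz s hs := (hX.uDisjoint_add_right (hy s hs).symm (hz s hs).symm).symm
  zero_mem' s _ := (uDisjoint_zero_right s).symm
  smul_mem' t _ hy s hs := (hX.uDisjoint_smul_right (hy s hs).symm t).symm

end IsPreRiesz

/-- Pairwise disjoint nonzero vectors in a pre-Riesz space are linearly independent. -/
theorem stmt_13 (hX : IsPreRiesz X) {m : ℕ} (x : Fin m → X) (hx : ∀ i, x i ≠ 0)
    (hdisj : ∀ i j, i ≠ j → UDisjoint (x i) (x j)) :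
    LinearIndependent ℝ x := by
  refine linearIndependent_iff_notMem_span.2 fun i hi => hx i (uDisjoint_self_iff.1 ?_)
  have hspan : Submodule.span ℝ (x '' (Set.univ \ {i})) ≤ hX.dCompSubmodule {x i} := by
    rw [Submodule.span_le]
    rintro _ ⟨j, hj, rfl⟩ _ rfl
    exact hdisj j i (by simpa using hj)
  exact hspan hi (x i) rfl
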